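/- arXiv:2505.02838 — 2 statements merged into one kernel-verified Lean document; each statement's English description precedes it below -/
import Mathlib

section
/- Let A, B : X → X be self-adjoint linear operators. Then for every x ∈ X with ⟨x, x⟩ = 1 one has max{Δ_x(A), Δ_x(B)} ≥ √(|⟨(A² + B²)x, x⟩ − (⟨(A+B)x, x⟩² + ⟨(A−B)x, x⟩²)/2|), and this lower bound equals √(|(⟨(A+B)²x, x⟩ + ⟨(A−B)²x, x⟩ − ⟨(A+B)x, x⟩² − ⟨(A−B)x, x⟩²)/2|), where the outer |·| is the absolute value of K and √ is the real square root. -/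
/-!
Writing `y := Cx - ⟨Cx, x⟩ x`, self-adjointness and `⟨x, x⟩ = 1` give
`⟨y, y⟩ = ⟨C²x, x⟩ - ⟨Cx, x⟩²`, so the Cauchy–Schwarz bound turns the "variance" of `C` into a
lower bound `|⟨C²x, x⟩ - ⟨Cx, x⟩²| ≤ Δ_x(C)²`. The quantity under the square root is the sum of
the variances of `A` and `B`, and the ultrametric inequality bounds the absolute value of this
sum by the larger of the two squared uncertainties. The second form of the bound comes from the
operator identity `(A + B)² + (A - B)² = 2 (A² + B²)`.
-/

theorem nonneg_of_le_max_of_map_smul {K X : Type*} [Field K] [AddCommGroup X] [Module K X]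
    (v : AbsoluteValue K ℝ) (N : X → ℝ) (hN_ultra : ∀ u w : X, N (u + w) ≤ max (N u) (N w))
    (hN_smul : ∀ (a : K) (u : X), N (a • u) = v a * N u) (u : X) : 0 ≤ N u := by
  have hN_zero : N 0 = 0 := by simpa using hN_smul 0 0
  have hN_neg : N (-u) = N u := by simpa using hN_smul (-1) u
  simpa [hN_zero, hN_neg] using hN_ultra u (-u)

namespace LinearMap.BilinForm

section CommRing

variable {R M : Type*} [CommRing R] [AddCommGroup M] [Module R M]

def variance (β : LinearMap.BilinForm R M) (C : M →ₗ[R] M) (x : M) : R :=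
  β (C (C x)) x - β (C x) x ^ 2

theorem apply_self_sub_smul_eq_variance (β : LinearMap.BilinForm R M) {C : M →ₗ[R] M}
    (hC : LinearMap.IsSelfAdjoint β C) {x : M} (hx : β x x = 1) :
    β (C x - β (C x) x • x) (C x - β (C x) x • x) = variance β C x := by
  have hCC : β (C x) (C x) = β (C (C x)) x := (hC (C x) x).symm
  have hxC : β x (C x) = β (C x) x := (hC x x).symm
  simp only [map_sub, map_smul, LinearMap.sub_apply, LinearMap.smul_apply, smul_eq_mul, hx,
    hCC, hxC, variance]
  ring

theorem abv_variance_le_sq {S : Type*} [Semiring S] [PartialOrder S] (v : AbsoluteValue R S)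
    (N : M → S) (β : LinearMap.BilinForm R M) (hcs : ∀ u w : M, v (β u w) ≤ N u * N w)
    {C : M →ₗ[R] M} (hC : LinearMap.IsSelfAdjoint β C) {x : M} (hx : β x x = 1) :
    v (variance β C x) ≤ N (C x - β (C x) x • x) ^ 2 := by
  rw [← apply_self_sub_smul_eq_variance β hC hx, sq]
  exact hcs _ _

theorem apply_add_comp_add_add_apply_sub_comp_sub (β : LinearMap.BilinForm R M)
    (A B : M →ₗ[R] M) (x : M) :
    β (((A + B) ∘ₗ (A + B)) x) x + β (((A - B) ∘ₗ (A - B)) x) x =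
      2 * β ((A ∘ₗ A + B ∘ₗ B) x) x := by
  simp only [LinearMap.comp_apply, LinearMap.add_apply, LinearMap.sub_apply, map_add, map_sub]
  ring

end CommRing

section Field

variable {K X : Type*} [Field K] [AddCommGroup X] [Module K X]

def ofSymm (ip : X → X → K) (hsymm : ∀ u w : X, ip u w = ip w u)
    (hadd : ∀ u w z : X, ip u (w + z) = ip u w + ip u z)
    (hsmul : ∀ (a : K) (u w : X), ip u (a • w) = a * ip u w) : LinearMap.BilinForm K X :=
  LinearMap.mk₂ K ip (fun u w z => by rw [hsymm, hadd, hsymm z u, hsymm z w])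
    (fun a u w => by rw [hsymm, hsmul, hsymm, smul_eq_mul]) hadd hsmul

theorem variance_add_variance (β : LinearMap.BilinForm K X) (h2 : (2 : K) ≠ 0)
    (A B : X →ₗ[K] X) (x : X) :
    variance β A x + variance β B x =
      β ((A ∘ₗ A + B ∘ₗ B) x) x - (β ((A + B) x) x ^ 2 + β ((A - B) x) x ^ 2) / 2 := by
  simp only [LinearMap.comp_apply, LinearMap.add_apply, LinearMap.sub_apply, map_add, map_sub,
    variance]
  field_simp
  ring

end Field

end LinearMap.BilinForm

open LinearMap.BilinForm

/-- For self-adjoint `A B` and `⟨x, x⟩ = 1`, over a field of characteristic `≠ 2`: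
`max{Δ_x(A), Δ_x(B)} ≥ √(|⟨(A² + B²)x, x⟩ − (⟨(A+B)x, x⟩² + ⟨(A−B)x, x⟩²)/2|)`, and this
lower bound equals
`√(|(⟨(A+B)²x, x⟩ + ⟨(A−B)²x, x⟩ − ⟨(A+B)x, x⟩² − ⟨(A−B)x, x⟩²)/2|)`. -/
theorem padic_uncertainty_selfadjoint_sum_form
    {K X : Type*} [Field K] [AddCommGroup X] [Module K X]
    (v : AbsoluteValue K ℝ) (hna : IsNonarchimedean v)
    (N : X → ℝ)
    (hN_ultra : ∀ u w : X, N (u + w) ≤ max (N u) (N w))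
    (hN_smul : ∀ (a : K) (u : X), N (a • u) = v a * N u)
    (ip : X → X → K)
    (hsymm : ∀ u w : X, ip u w = ip w u)
    (hadd : ∀ u w z : X, ip u (w + z) = ip u w + ip u z)
    (hsmul : ∀ (a : K) (u w : X), ip u (a • w) = a * ip u w)
    (hcs : ∀ u w : X, v (ip u w) ≤ N u * N w)
    (h2 : (2 : K) ≠ 0)
    (A B : X →ₗ[K] X)
    (hA : ∀ u w : X, ip (A u) w = ip u (A w))
    (hB : ∀ u w : X, ip (B u) w = ip u (B w))
    (x : X) (hx : ip x x = 1) :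
    max (N (A x - ip (A x) x • x)) (N (B x - ip (B x) x • x)) ≥
      Real.sqrt (v (ip ((A ∘ₗ A + B ∘ₗ B) x) x -
        (ip ((A + B) x) x ^ 2 + ip ((A - B) x) x ^ 2) / 2)) ∧
    Real.sqrt (v (ip ((A ∘ₗ A + B ∘ₗ B) x) x -
        (ip ((A + B) x) x ^ 2 + ip ((A - B) x) x ^ 2) / 2)) =
      Real.sqrt (v ((ip (((A + B) ∘ₗ (A + B)) x) x + ip (((A - B) ∘ₗ (A - B)) x) x -
        ip ((A + B) x) x ^ 2 - ip ((A - B) x) x ^ 2) / 2)) := by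
  let β := ofSymm ip hsymm hadd hsmul
  have hN := nonneg_of_le_max_of_map_smul v N hN_ultra hN_smul
  have hvar : ip ((A ∘ₗ A + B ∘ₗ B) x) x - (ip ((A + B) x) x ^ 2 + ip ((A - B) x) x ^ 2) / 2 =
      variance β A x + variance β B x :=
    (variance_add_variance β h2 A B x).symm
  have hsum : ip (((A + B) ∘ₗ (A + B)) x) x + ip (((A - B) ∘ₗ (A - B)) x) x =
      2 * ip ((A ∘ₗ A + B ∘ₗ B) x) x :=
    apply_add_comp_add_add_apply_sub_comp_sub β A B x
  set ΔA := N (A x - ip (A x) x • x)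
  set ΔB := N (B x - ip (B x) x • x)
  have hvA : v (variance β A x) ≤ max ΔA ΔB ^ 2 :=
    (abv_variance_le_sq v N β hcs hA hx).trans (pow_le_pow_left₀ (hN _) (le_max_left _ _) 2)
  have hvB : v (variance β B x) ≤ max ΔA ΔB ^ 2 :=
    (abv_variance_le_sq v N β hcs hB hx).trans (pow_le_pow_left₀ (hN _) (le_max_right _ _) 2)
  refine ⟨?_, ?_⟩
  · rw [hvar, ge_iff_le, Real.sqrt_le_left (le_max_of_le_left (hN _))]
    exact (hna _ _).trans (max_le hvA hvB)
  · rw [hsum]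
    congr 2
    field_simp
    ring
end

section
/- (p-adic Maccone–Pati uncertainty principle, sum form) Let A, B : X → X be linear operators. Then for every x ∈ X with ⟨x, x⟩ = 1 and every y ∈ X with ‖y‖ ≤ 1 and ⟨x, y⟩ = 0, one has max{Δ_x(A), Δ_x(B)} ≥ |⟨(A+B)x, y⟩|. -/
/-! Pairing with `y` kills the component of `Ax`, `Bx` along `x`, so `⟨(A+B)x, y⟩` is the sum of the
pairings of `y` with the two deviation vectors `Ax - ⟨Ax,x⟩x`, `Bx - ⟨Bx,x⟩x`. The ultrametric
inequality for `|·|` and Cauchy–Schwarz with `‖y‖ ≤ 1` bound this by the larger deviation. -/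

section UltrametricNorm

variable {K X : Type*} [Field K] [AddCommGroup X] [Module K X]

lemma apply_neg_of_apply_smul (v : AbsoluteValue K ℝ) {N : X → ℝ}
    (hN_smul : ∀ (a : K) (u : X), N (a • u) = v a * N u) (u : X) : N (-u) = N u := by
  simpa using hN_smul (-1) u

lemma apply_nonneg_of_apply_smul_of_apply_add_le_max (v : AbsoluteValue K ℝ) {N : X → ℝ}
    (hN_ultra : ∀ u w : X, N (u + w) ≤ max (N u) (N w))
    (hN_smul : ∀ (a : K) (u : X), N (a • u) = v a * N u) (u : X) : 0 ≤ N u := by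
  have hN_zero : N 0 = 0 := by simpa using hN_smul 0 0
  simpa [apply_neg_of_apply_smul v hN_smul, hN_zero] using hN_ultra u (-u)

end UltrametricNorm

section Pairing

variable {K X : Type*} [Field K] [AddCommGroup X] [Module K X] {ip : X → X → K}

lemma pairing_sub_smul_of_orthogonal
    (hadd : ∀ u w z : X, ip u (w + z) = ip u w + ip u z)
    (hsmul : ∀ (a : K) (u w : X), ip u (a • w) = a * ip u w)
    {x y : X} (hyx : ip y x = 0) (z : X) (c : K) : ip y (z - c • x) = ip y z := by
  rw [sub_eq_add_neg, ← neg_smul, hadd, hsmul, hyx, mul_zero, add_zero]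

lemma abv_pairing_le_of_le_one (v : AbsoluteValue K ℝ) {N : X → ℝ}
    (hN_ultra : ∀ u w : X, N (u + w) ≤ max (N u) (N w))
    (hN_smul : ∀ (a : K) (u : X), N (a • u) = v a * N u)
    (hcs : ∀ u w : X, v (ip u w) ≤ N u * N w)
    {y : X} (hy : N y ≤ 1) (u : X) : v (ip y u) ≤ N u :=
  calc v (ip y u) ≤ N y * N u := hcs y u
    _ ≤ N u := mul_le_of_le_one_left
        (apply_nonneg_of_apply_smul_of_apply_add_le_max v hN_ultra hN_smul u) hy

end Pairing

theorem padic_maccone_pati_sum_general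
    {K X : Type*} [Field K] [AddCommGroup X] [Module K X]
    (v : AbsoluteValue K ℝ) (hna : IsNonarchimedean v)
    (N : X → ℝ)
    (hN_ultra : ∀ u w : X, N (u + w) ≤ max (N u) (N w))
    (hN_smul : ∀ (a : K) (u : X), N (a • u) = v a * N u)
    (ip : X → X → K)
    (hsymm : ∀ u w : X, ip u w = ip w u)
    (hadd : ∀ u w z : X, ip u (w + z) = ip u w + ip u z)
    (hsmul : ∀ (a : K) (u w : X), ip u (a • w) = a * ip u w)
    (hcs : ∀ u w : X, v (ip u w) ≤ N u * N w)
    (A B : X →ₗ[K] X)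
    (x : X)
    (y : X) (hy : N y ≤ 1) (hxy : ip x y = 0) :
    max (N (A x - ip (A x) x • x)) (N (B x - ip (B x) x • x)) ≥
      v (ip ((A + B) x) y) := by
  have hyx : ip y x = 0 := hsymm y x ▸ hxy
  have hsum : ip ((A + B) x) y =
      ip y (A x - ip (A x) x • x) + ip y (B x - ip (B x) x • x) := by
    rw [pairing_sub_smul_of_orthogonal hadd hsmul hyx,
      pairing_sub_smul_of_orthogonal hadd hsmul hyx, ← hadd, hsymm, LinearMap.add_apply]
  have hbound := abv_pairing_le_of_le_one v hN_ultra hN_smul hcs hy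
  calc v (ip ((A + B) x) y)
      ≤ max (v (ip y (A x - ip (A x) x • x))) (v (ip y (B x - ip (B x) x • x))) :=
        hsum ▸ hna _ _
    _ ≤ _ := max_le_max (hbound _) (hbound _)

/-- **p-adic Maccone–Pati uncertainty principle (sum form).**
For linear operators `A B`, `⟨x, x⟩ = 1`, and any `y` with `‖y‖ ≤ 1` and `⟨x, y⟩ = 0`:
`max{Δ_x(A), Δ_x(B)} ≥ |⟨(A+B)x, y⟩|`. -/
theorem padic_maccone_pati_sum
    {K X : Type*} [Field K] [AddCommGroup X] [Module K X]
    (v : AbsoluteValue K ℝ) (hna : IsNonarchimedean v)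
    (N : X → ℝ)
    (hN_ultra : ∀ u w : X, N (u + w) ≤ max (N u) (N w))
    (hN_smul : ∀ (a : K) (u : X), N (a • u) = v a * N u)
    (ip : X → X → K)
    (hsymm : ∀ u w : X, ip u w = ip w u)
    (hadd : ∀ u w z : X, ip u (w + z) = ip u w + ip u z)
    (hsmul : ∀ (a : K) (u w : X), ip u (a • w) = a * ip u w)
    (hcs : ∀ u w : X, v (ip u w) ≤ N u * N w)
    (A B : X →ₗ[K] X)
    (x : X) (hx : ip x x = 1)
    (y : X) (hy : N y ≤ 1) (hxy : ip x y = 0) :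
    max (N (A x - ip (A x) x • x)) (N (B x - ip (B x) x • x)) ≥
      v (ip ((A + B) x) y) :=
  padic_maccone_pati_sum_general v hna N hN_ultra hN_smul ip hsymm hadd hsmul hcs A B x y hy hxy
end
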